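/- In a compact closed category C, the induced family S_{x,x'} : C(a ⊗ x, a' ⊗ x') → C(b ⊗ x, b' ⊗ x') arising from a morphism F : a* ⊗ a' → b* ⊗ b' is a locally-applicable transformation: for every f : a ⊗ x, a' ⊗ x' and every g : x ⊗ y → x' ⊗ y' in C, S applied to the composite in which f acts on the a,x wires and g is tensored on, commutes with g, i.e. S_{x⊗y, x'⊗y'} of the obvious composite of f with g equals the composite of S_{x,x'}(f) with g. -/

import Mathlib

/-!
`S` conjugates "apply `F` to the `a* ⊗ a'` wires" by the currying bijection
`C(a ⊗ x, a' ⊗ x') ≅ C(x, a* ⊗ (a' ⊗ x'))`. Currying, uncurrying and the action of `F` are all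
natural in the auxiliary output and, by coherence, compatible with tensoring on an idle wire `y`.
Hence `S` commutes with `- ≫ a' ◁ g` and with `- ⊗ 𝟙 y`, and the composite in the statement is
`f ⊗ 𝟙 y` followed by `a' ◁ g`.
-/

open CategoryTheory MonoidalCategory

noncomputable section

variable {C : Type u} [Category.{v} C] [MonoidalCategory C] [SymmetricCategory C]
  [LeftRigidCategory C]

/-- Currying `C(a ⊗ x, a' ⊗ x') → C(x, a* ⊗ (a' ⊗ x'))` via the unit of the duality. -/
def curryCC (a a' : C) {x x' : C} (f : a ⊗ x ⟶ a' ⊗ x') : x ⟶ (ᘁa : C) ⊗ (a' ⊗ x') :=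
  (λ_ x).inv ≫ ((η_ (ᘁa : C) a) ▷ x) ≫ (α_ (ᘁa : C) a x).hom ≫ ((ᘁa : C) ◁ f)

/-- Uncurrying `C(x, b* ⊗ (b' ⊗ x')) → C(b ⊗ x, b' ⊗ x')` via the counit. -/
def uncurryCC (b b' : C) {x x' : C} (g : x ⟶ (ᘁb : C) ⊗ (b' ⊗ x')) : b ⊗ x ⟶ b' ⊗ x' :=
  (b ◁ g) ≫ (α_ b (ᘁb : C) (b' ⊗ x')).inv ≫ ((ε_ (ᘁb : C) b) ▷ (b' ⊗ x')) ≫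
    (λ_ (b' ⊗ x')).hom

/-- The family `S_{x,x'} : C(a ⊗ x, a' ⊗ x') → C(b ⊗ x, b' ⊗ x')` induced by
`F : a* ⊗ a' ⟶ b* ⊗ b'`: curry, apply `F`, uncurry. -/
def Sapp (a a' b b' : C) (F : (ᘁa : C) ⊗ a' ⟶ (ᘁb : C) ⊗ b') {x x' : C}
    (f : a ⊗ x ⟶ a' ⊗ x') : b ⊗ x ⟶ b' ⊗ x' :=
  uncurryCC b b'
    (curryCC a a' f ≫ (α_ (ᘁa : C) a' x').inv ≫ (F ▷ x') ≫ (α_ (ᘁb : C) b' x').hom)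

end

section

variable {C : Type u} [Category.{v} C] [MonoidalCategory C] [LeftRigidCategory C]

def whiskerRightAssoc {a a' b b' : C} (F : (ᘁa : C) ⊗ a' ⟶ (ᘁb : C) ⊗ b') (w : C) :
    (ᘁa : C) ⊗ (a' ⊗ w) ⟶ (ᘁb : C) ⊗ (b' ⊗ w) :=
  (α_ (ᘁa : C) a' w).inv ≫ (F ▷ w) ≫ (α_ (ᘁb : C) b' w).hom

theorem Sapp_eq_uncurryCC (a a' b b' : C) (F : (ᘁa : C) ⊗ a' ⟶ (ᘁb : C) ⊗ b') {x x' : C}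
    (f : a ⊗ x ⟶ a' ⊗ x') :
    Sapp a a' b b' F f = uncurryCC b b' (curryCC a a' f ≫ whiskerRightAssoc F x') :=
  rfl

theorem curryCC_comp_whiskerLeft (a a' : C) {x w w' : C} (f : a ⊗ x ⟶ a' ⊗ w) (g : w ⟶ w') :
    curryCC a a' (f ≫ (a' ◁ g)) = curryCC a a' f ≫ ((ᘁa : C) ◁ (a' ◁ g)) := by
  simp [curryCC]

theorem uncurryCC_comp_whiskerLeft (b b' : C) {z w w' : C} (p : z ⟶ (ᘁb : C) ⊗ (b' ⊗ w))
    (g : w ⟶ w') :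
    uncurryCC b b' (p ≫ ((ᘁb : C) ◁ (b' ◁ g))) = uncurryCC b b' p ≫ (b' ◁ g) := by
  simp only [uncurryCC, MonoidalCategory.whiskerLeft_comp, Category.assoc,
    associator_inv_naturality_right_assoc, whisker_exchange_assoc]
  simp

theorem whiskerRightAssoc_naturality {a a' b b' : C} (F : (ᘁa : C) ⊗ a' ⟶ (ᘁb : C) ⊗ b')
    {w w' : C} (g : w ⟶ w') :
    ((ᘁa : C) ◁ (a' ◁ g)) ≫ whiskerRightAssoc F w' =
      whiskerRightAssoc F w ≫ ((ᘁb : C) ◁ (b' ◁ g)) := by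
  rw [whiskerRightAssoc, whiskerRightAssoc, associator_inv_naturality_right_assoc,
    whisker_exchange_assoc, Category.assoc, Category.assoc, associator_naturality_right]

theorem Sapp_comp_whiskerLeft (a a' b b' : C) (F : (ᘁa : C) ⊗ a' ⟶ (ᘁb : C) ⊗ b')
    {x w w' : C} (f : a ⊗ x ⟶ a' ⊗ w) (g : w ⟶ w') :
    Sapp a a' b b' F (f ≫ (a' ◁ g)) = Sapp a a' b b' F f ≫ (b' ◁ g) := by
  rw [Sapp_eq_uncurryCC, curryCC_comp_whiskerLeft, Category.assoc,
    whiskerRightAssoc_naturality, ← Category.assoc, uncurryCC_comp_whiskerLeft,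
    Sapp_eq_uncurryCC]

theorem curryCC_whiskerRight (a a' : C) {x x' : C} (y : C) (f : a ⊗ x ⟶ a' ⊗ x') :
    curryCC a a' ((α_ a x y).inv ≫ (f ▷ y) ≫ (α_ a' x' y).hom) =
      (curryCC a a' f ▷ y) ≫ (α_ (ᘁa : C) (a' ⊗ x') y).hom ≫
        ((ᘁa : C) ◁ (α_ a' x' y).hom) := by
  simp only [curryCC]
  monoidal

theorem uncurryCC_whiskerRight (b b' : C) {x x' : C} (y : C) (p : x ⟶ (ᘁb : C) ⊗ (b' ⊗ x')) :
    uncurryCC b b' ((p ▷ y) ≫ (α_ (ᘁb : C) (b' ⊗ x') y).hom ≫ ((ᘁb : C) ◁ (α_ b' x' y).hom)) =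
      (α_ b x y).inv ≫ (uncurryCC b b' p ▷ y) ≫ (α_ b' x' y).hom := by
  simp only [uncurryCC]
  monoidal

theorem whiskerRightAssoc_whiskerRight {a a' b b' : C} (F : (ᘁa : C) ⊗ a' ⟶ (ᘁb : C) ⊗ b')
    (w y : C) :
    (α_ (ᘁa : C) (a' ⊗ w) y).hom ≫ ((ᘁa : C) ◁ (α_ a' w y).hom) ≫ whiskerRightAssoc F (w ⊗ y) =
      (whiskerRightAssoc F w ▷ y) ≫ (α_ (ᘁb : C) (b' ⊗ w) y).hom ≫
        ((ᘁb : C) ◁ (α_ b' w y).hom) := by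
  simp only [whiskerRightAssoc]
  monoidal

theorem Sapp_whiskerRight (a a' b b' : C) (F : (ᘁa : C) ⊗ a' ⟶ (ᘁb : C) ⊗ b') {x x' : C}
    (y : C) (f : a ⊗ x ⟶ a' ⊗ x') :
    Sapp a a' b b' F ((α_ a x y).inv ≫ (f ▷ y) ≫ (α_ a' x' y).hom) =
      (α_ b x y).inv ≫ (Sapp a a' b b' F f ▷ y) ≫ (α_ b' x' y).hom := by
  rw [Sapp_eq_uncurryCC, curryCC_whiskerRight, Category.assoc, Category.assoc,
    whiskerRightAssoc_whiskerRight, ← MonoidalCategory.comp_whiskerRight_assoc,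
    uncurryCC_whiskerRight, Sapp_eq_uncurryCC]

end

section

variable {C : Type u} [Category.{v} C] [MonoidalCategory C] [SymmetricCategory C]
  [LeftRigidCategory C]

/-- The induced family `S` is a locally-applicable transformation: applying `S` to the
composite in which `f` acts on the `a, x` wires and a further process `g` (possibly
entangling the auxiliary system `x'` with an extra system `y`) is composed on,
commutes with `g`. -/
theorem stmt14 (a a' b b' : C) (F : (ᘁa : C) ⊗ a' ⟶ (ᘁb : C) ⊗ b') :
    ∀ (x x' x'' y y' : C) (f : a ⊗ x ⟶ a' ⊗ x') (g : x' ⊗ y ⟶ x'' ⊗ y'),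
      Sapp a a' b b' F
          ((α_ a x y).inv ≫ (f ▷ y) ≫ (α_ a' x' y).hom ≫ (a' ◁ g)) =
        (α_ b x y).inv ≫ (Sapp a a' b b' F f ▷ y) ≫ (α_ b' x' y).hom ≫ (b' ◁ g) := by
  intro x x' x'' y y' f g
  calc Sapp a a' b b' F ((α_ a x y).inv ≫ (f ▷ y) ≫ (α_ a' x' y).hom ≫ (a' ◁ g))
      = Sapp a a' b b' F (((α_ a x y).inv ≫ (f ▷ y) ≫ (α_ a' x' y).hom) ≫ (a' ◁ g)) := by
        simp only [Category.assoc]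
    _ = _ := by
        rw [Sapp_comp_whiskerLeft, Sapp_whiskerRight]
        simp only [Category.assoc]

end
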